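/- Let Δ be a finite simple graph that is connected, triangle-free, twin-free, has at least two vertices, and let ω be a weight function on vertices of Δ taking the value 1 only on leaves, with the additional condition that if Δ is a single edge then ω never takes the value 1. Then the blow-up graph Δ^ω is triangle-free, and every vertex of Δ^ω lies in an induced 4-cycle. -/

import Mathlib

open SimpleGraph

/-- `a,b` and `c,d` are the two diagonals of an induced square (4-cycle) `a–c–b–d` of `G`. -/
def IsInducedSquare {V : Type*} (G : SimpleGraph V) (a b c d : V) : Prop :=
  a ≠ b ∧ c ≠ d ∧ G.Adj a c ∧ G.Adj c b ∧ G.Adj b d ∧ G.Adj d a ∧ ¬ G.Adj a b ∧ ¬ G.Adj c d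

/-- The blow-up graph `Δ^ω`: each vertex `v` is replaced by `ω v` copies, with copies of
`v` and `w` adjacent iff `v` and `w` are adjacent. -/
def Blowup {V : Type*} (G : SimpleGraph V) (ω : V → ℕ) : SimpleGraph (Σ v : V, Fin (ω v)) where
  Adj p q := G.Adj p.1 q.1
  symm := ⟨fun _ _ h => G.adj_symm h⟩
  loopless := ⟨fun p h => G.irrefl h⟩

/-!
A vertex `(v, i)` of the blow-up lies on the square `p – (c, 0) – q – (c, 1)` whenever `p ≠ q` lie
over (possibly equal) neighbours of a vertex `c` with `ω c ≥ 2`; triangle-freeness makes it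
induced. The neighbour `u` of a leaf `v` has `ω u ≥ 2`, since otherwise `u` is a leaf too and `Δ`
is a single edge. So if `ω v = 1` take `c = u` and `q` over a second neighbour of `u` (which exists
for the same reason); if `ω v ≥ 2` and `v` is a leaf take `c = u` and `q` a second copy of `v`;
otherwise take `c = v` and `p, q` over two distinct neighbours of `v`.
-/

namespace SimpleGraph

variable {V W : Type*} {G : SimpleGraph V}

theorem CliqueFree.of_hom {H : SimpleGraph W} {n : ℕ} (f : H →g G) (h : G.CliqueFree n) :
    H.CliqueFree n := by
  contrapose h
  rw [not_cliqueFree_iff_top_isContained] at h ⊢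
  obtain ⟨c⟩ := h
  let g := f.comp c.toHom
  exact ⟨⟨g, Hom.injective_of_top_hom g⟩⟩

theorem CliqueFree.not_adj_of_adj_of_adj (h : G.CliqueFree 3) {a x y : V}
    (hx : G.Adj a x) (hy : G.Adj a y) : ¬ G.Adj x y := by
  classical
  exact fun hxy => h {a, x, y} (is3Clique_triple_iff.mpr ⟨hx, hy, hxy⟩)

theorem neighborSet_eq_singleton_iff {v u : V} :
    G.neighborSet v = {u} ↔ G.Adj v u ∧ ∀ x, G.Adj v x → x = u := by
  simp only [Set.eq_singleton_iff_unique_mem, mem_neighborSet]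

theorem exists_adj_ne_of_neighborSet_ne_singleton {v u : V} (hvu : G.Adj v u)
    (hv : G.neighborSet v ≠ {u}) : ∃ x, G.Adj v x ∧ x ≠ u := by
  by_contra! h
  exact hv (neighborSet_eq_singleton_iff.mpr ⟨hvu, h⟩)

def IsSingleEdge (G : SimpleGraph V) : Prop :=
  ∃ a b, a ≠ b ∧ G.Adj a b ∧ ∀ x, x = a ∨ x = b

theorem Preconnected.mem_of_adj_closed (hG : G.Preconnected) {S : Set V}
    (hS : ∀ a b, G.Adj a b → a ∈ S → b ∈ S) {a : V} (ha : a ∈ S) (x : V) : x ∈ S := by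
  obtain ⟨p⟩ := hG a x
  induction p with
  | nil => exact ha
  | cons hab _ ih => exact ih (hS _ _ hab ha)

theorem Preconnected.isSingleEdge_of_neighborSet_eq_singleton (hG : G.Preconnected) {v u : V}
    (hv : G.neighborSet v = {u}) (hu : G.neighborSet u = {v}) : G.IsSingleEdge := by
  have hvu := (neighborSet_eq_singleton_iff.mp hv).1
  refine ⟨v, u, hvu.ne, hvu, hG.mem_of_adj_closed (S := {v, u}) ?_ (Set.mem_insert v _)⟩
  rintro a b hab (rfl | rfl)
  · exact Or.inr (hv ▸ hab : b ∈ ({u} : Set V))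
  · exact Or.inl (hu ▸ hab : b ∈ ({v} : Set V))

theorem Preconnected.exists_adj_ne_of_neighborSet_eq_singleton (hG : G.Preconnected) {v u : V}
    (hv : G.neighborSet v = {u}) (hG' : ¬ G.IsSingleEdge) : ∃ x, G.Adj u x ∧ x ≠ v :=
  exists_adj_ne_of_neighborSet_ne_singleton (neighborSet_eq_singleton_iff.mp hv).1.symm
    fun hu => hG' (hG.isSingleEdge_of_neighborSet_eq_singleton hv hu)

theorem Preconnected.two_le_of_neighborSet_eq_singleton (hG : G.Preconnected) {ω : V → ℕ}
    (hpos : ∀ v, 0 < ω v) (hleaf : ∀ v, ω v = 1 → ∃ u, G.neighborSet v = {u})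
    (hedge : G.IsSingleEdge → ∀ v, ω v ≠ 1) {v u : V} (hv : G.neighborSet v = {u}) :
    2 ≤ ω u := by
  have huv := (neighborSet_eq_singleton_iff.mp hv).1.symm
  have hu : ω u ≠ 1 := fun h1 => by
    obtain ⟨w, hw⟩ := hleaf u h1
    obtain rfl := (neighborSet_eq_singleton_iff.mp hw).2 v huv
    exact hedge (hG.isSingleEdge_of_neighborSet_eq_singleton hv hw) u h1
  have := hpos u
  omega

end SimpleGraph

theorem IsInducedSquare.symm {V : Type*} {G : SimpleGraph V} {a b c d : V}
    (h : IsInducedSquare G a b c d) : IsInducedSquare G c d a b := by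
  obtain ⟨hab, hcd, hac, hcb, hbd, hda, hnab, hncd⟩ := h
  exact ⟨hcd, hab, hac.symm, hda.symm, hbd.symm, hcb.symm, hncd, hnab⟩

namespace Blowup

variable {V : Type*} {G : SimpleGraph V} {ω : V → ℕ}

variable (G ω) in
def fstHom : Blowup G ω →g G where
  toFun := Sigma.fst
  map_rel' h := h

theorem cliqueFree {n : ℕ} (h : G.CliqueFree n) : (Blowup G ω).CliqueFree n :=
  h.of_hom (fstHom G ω)

theorem isInducedSquare_of_adj (hG : G.CliqueFree 3) {p q : Σ v, Fin (ω v)} {c : V}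
    (hpq : p ≠ q) (hp : G.Adj p.1 c) (hq : G.Adj q.1 c) {i j : Fin (ω c)} (hij : i ≠ j) :
    IsInducedSquare (Blowup G ω) p q ⟨c, i⟩ ⟨c, j⟩ :=
  ⟨hpq, by simpa using hij, hp, hq.symm, hq, hp.symm,
    hG.not_adj_of_adj_of_adj hp.symm hq.symm, G.irrefl⟩

theorem exists_isInducedSquare_of_adj (hG : G.CliqueFree 3) {p q : Σ v, Fin (ω v)} {c : V}
    (hpq : p ≠ q) (hp : G.Adj p.1 c) (hq : G.Adj q.1 c) (hc : 2 ≤ ω c) :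
    ∃ r s, IsInducedSquare (Blowup G ω) p q r s :=
  ⟨_, _, isInducedSquare_of_adj (i := ⟨0, by omega⟩) (j := ⟨1, hc⟩) hG hpq hp hq (by simp)⟩

end Blowup

theorem stmt12_general {V : Type*} [Fintype V] (G : SimpleGraph V) (ω : V → ℕ)
    (hpos : ∀ v, 0 < ω v)
    (hconn : G.Connected)
    (htf : G.CliqueFree 3)
    (hcard : 2 ≤ Fintype.card V)
    (hleaf : ∀ v : V, ω v = 1 → ∃ u : V, G.neighborSet v = {u})
    (hedge : (∃ a b : V, a ≠ b ∧ G.Adj a b ∧ ∀ x : V, x = a ∨ x = b) → ∀ v, ω v ≠ 1) :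
    (Blowup G ω).CliqueFree 3 ∧
    ∀ p : Σ v : V, Fin (ω v), ∃ q r s, IsInducedSquare (Blowup G ω) p q r s := by
  have : Nontrivial V := Fintype.one_lt_card_iff_nontrivial.mp hcard
  have hG := hconn.preconnected
  have hleaf_adj {v u : V} (hv : G.neighborSet v = {u}) : 2 ≤ ω u :=
    hG.two_le_of_neighborSet_eq_singleton hpos hleaf hedge hv
  refine ⟨Blowup.cliqueFree htf, ?_⟩
  rintro ⟨v, i⟩
  by_cases h1 : ω v = 1
  · obtain ⟨u, hv⟩ := hleaf v h1
    obtain ⟨x, hux, hxv⟩ := hG.exists_adj_ne_of_neighborSet_eq_singleton hv (hedge · v h1)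
    exact ⟨_, Blowup.exists_isInducedSquare_of_adj (p := ⟨v, i⟩) (q := ⟨x, 0, hpos x⟩) htf
      (mt (congrArg Sigma.fst) hxv.symm) (neighborSet_eq_singleton_iff.mp hv).1 hux.symm
      (hleaf_adj hv)⟩
  obtain ⟨j, hji⟩ := Fintype.exists_ne_of_one_lt_card
    (by rw [Fintype.card_fin]; have := hpos v; omega) i
  obtain ⟨u, hvu⟩ := hG.exists_adj_of_nontrivial v
  by_cases hv : G.neighborSet v = {u}
  · exact ⟨_, Blowup.exists_isInducedSquare_of_adj (p := ⟨v, i⟩) (q := ⟨v, j⟩) htf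
      (by simpa using hji.symm) hvu hvu (hleaf_adj hv)⟩
  · obtain ⟨y, hvy, hyu⟩ := exists_adj_ne_of_neighborSet_ne_singleton hvu hv
    exact ⟨_, _, _, (Blowup.isInducedSquare_of_adj (p := ⟨u, 0, hpos u⟩) (q := ⟨y, 0, hpos y⟩)
      htf (mt (congrArg Sigma.fst) hyu.symm) hvu.symm hvy.symm hji.symm).symm⟩

/-- If `Δ` is connected, triangle-free, twin-free, with at least two vertices, `ω` takes
the value `1` only on leaves, and `ω` never takes the value `1` if `Δ` is a single edge,
then the blow-up `Δ^ω` is triangle-free and every vertex lies in an induced 4-cycle. -/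
theorem stmt12 {V : Type*} [Fintype V] (G : SimpleGraph V) (ω : V → ℕ)
    (hpos : ∀ v, 0 < ω v)
    (hconn : G.Connected)
    (htf : G.CliqueFree 3)
    (htwinfree : ∀ u v : V, G.neighborSet u = G.neighborSet v → u = v)
    (hcard : 2 ≤ Fintype.card V)
    (hleaf : ∀ v : V, ω v = 1 → ∃ u : V, G.neighborSet v = {u})
    (hedge : (∃ a b : V, a ≠ b ∧ G.Adj a b ∧ ∀ x : V, x = a ∨ x = b) → ∀ v, ω v ≠ 1) :
    (Blowup G ω).CliqueFree 3 ∧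
    ∀ p : Σ v : V, Fin (ω v), ∃ q r s, IsInducedSquare (Blowup G ω) p q r s :=
  stmt12_general G ω hpos hconn htf hcard hleaf hedge
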